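/- arXiv:2209.03425 — 4 statements merged into one kernel-verified Lean document; each statement's English description precedes it below -/
import Mathlib

section
/- Let ρ and ρ̃ be real-valued functionals on the set of compactly supported distributions with ρ(F) = a·Q₀(F) − b·Q₁(F) + ρ̃(F) for some constants a, b ≥ 0, where Q₀(F) = inf{x : F(x) > 0} and Q₁(F) = inf{x : F(x) ≥ 1}. If ρ̃ is quasi-convex with respect to mixtures (i.e., ρ̃(λF+(1−λ)G) ≤ max{ρ̃(F), ρ̃(G)} for all F, G and λ ∈ [0,1]), then ρ is also quasi-convex with respect to mixtures. -/
/-!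
On a strict mixture `H = l • F + (1 - l) • G` (`0 < l`), `H` is positive wherever `F` is, and `H`
reaches `1` only where `F` does; hence `Q₀ H ≤ Q₀ F` and `Q₁ F ≤ Q₁ H`, so the spread
`a Q₀ - b Q₁` of `H` is at most that of `F`, and likewise of `G` when `l < 1`. Choosing the
component with the larger value of `ρ̃` (the degenerate weight `l = 0` giving `H = G`) adds the two
bounds.
-/

/-- A cumulative distribution function on ℝ with bounded support. -/
def IsBddCDF (F : ℝ → ℝ) : Prop :=
  Monotone F ∧ (∀ x, 0 ≤ F x ∧ F x ≤ 1) ∧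
  (∀ x, ContinuousWithinAt F (Set.Ici x) x) ∧
  (∃ a b : ℝ, a < b ∧ F a = 0 ∧ F b = 1)

/-- Essential infimum. -/
noncomputable def Q0 (F : ℝ → ℝ) : ℝ := sInf {x : ℝ | 0 < F x}

/-- Essential supremum. -/
noncomputable def Q1 (F : ℝ → ℝ) : ℝ := sInf {x : ℝ | 1 ≤ F x}

def mix (l : ℝ) (F G : ℝ → ℝ) : ℝ → ℝ := fun x => l * F x + (1 - l) * G x

lemma mix_comm (l : ℝ) (F G : ℝ → ℝ) : mix l F G = mix (1 - l) G F := by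
  funext x
  simp only [mix]
  ring

@[simp]
lemma mix_zero (F G : ℝ → ℝ) : mix 0 F G = G := by
  funext x
  simp [mix]

namespace IsBddCDF

variable {F G : ℝ → ℝ}

lemma eq_zero_of_le (hF : IsBddCDF F) {x y : ℝ} (hy : F y = 0) (hxy : x ≤ y) : F x = 0 :=
  le_antisymm (hy ▸ hF.1 hxy) (hF.2.1 x).1

lemma eq_one_of_le (hF : IsBddCDF F) {x y : ℝ} (hy : F y = 1) (hyx : y ≤ x) : F x = 1 :=
  le_antisymm (hF.2.1 x).2 (hy ▸ hF.1 hyx)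

lemma bddBelow_pos (hF : IsBddCDF F) : BddBelow {x | 0 < F x} := by
  obtain ⟨a, -, -, ha, -⟩ := hF.2.2.2
  refine ⟨a, fun x hx => le_of_not_ge fun hxa => ?_⟩
  exact hx.ne' (hF.eq_zero_of_le ha hxa)

lemma nonempty_one_le (hF : IsBddCDF F) : {x | 1 ≤ F x}.Nonempty := by
  obtain ⟨-, b, -, -, hb⟩ := hF.2.2.2
  exact ⟨b, hb.ge⟩

lemma bddBelow_one_le (hF : IsBddCDF F) : BddBelow {x | 1 ≤ F x} :=
  hF.bddBelow_pos.mono fun _ (hx : 1 ≤ F _) => zero_lt_one.trans_le hx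

lemma nonempty_pos (hF : IsBddCDF F) : {x | 0 < F x}.Nonempty :=
  hF.nonempty_one_le.mono fun _ (hx : 1 ≤ F _) => zero_lt_one.trans_le hx

lemma mix (hF : IsBddCDF F) (hG : IsBddCDF G) {l : ℝ} (hl : l ∈ Set.Icc (0 : ℝ) 1) :
    IsBddCDF (mix l F G) := by
  obtain ⟨hl0, hl1⟩ := hl
  have hl1' : 0 ≤ 1 - l := sub_nonneg.2 hl1
  obtain ⟨aF, bF, habF, haF, hbF⟩ := hF.2.2.2
  obtain ⟨aG, bG, habG, haG, hbG⟩ := hG.2.2.2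
  refine ⟨(hF.1.const_mul hl0).add (hG.1.const_mul hl1'), fun x => ?_,
    fun x => (continuousWithinAt_const.mul (hF.2.2.1 x)).add
      (continuousWithinAt_const.mul (hG.2.2.1 x)),
    min aF aG, max bF bG, ?_, ?_, ?_⟩
  · obtain ⟨hF0, hF1⟩ := hF.2.1 x
    obtain ⟨hG0, hG1⟩ := hG.2.1 x
    simp only [_root_.mix]
    constructor <;> nlinarith
  · exact (min_le_left _ _).trans_lt (habF.trans_le (le_max_left _ _))
  · simp [_root_.mix, hF.eq_zero_of_le haF (min_le_left _ _),
      hG.eq_zero_of_le haG (min_le_right _ _)]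
  · simp [_root_.mix, hF.eq_one_of_le hbF (le_max_left _ _),
      hG.eq_one_of_le hbG (le_max_right _ _)]

end IsBddCDF

section Mixture

variable {F G : ℝ → ℝ} {l : ℝ}

lemma Q0_mix_le (hF : IsBddCDF F) (hG : IsBddCDF G) (hl0 : 0 < l) (hl1 : l ≤ 1) :
    Q0 (mix l F G) ≤ Q0 F := by
  refine csInf_le_csInf (hF.mix hG ⟨hl0.le, hl1⟩).bddBelow_pos hF.nonempty_pos fun x hx => ?_
  have hFx : 0 < F x := hx
  have hGx := (hG.2.1 x).1
  show 0 < l * F x + (1 - l) * G x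
  nlinarith

lemma Q1_le_Q1_mix (hF : IsBddCDF F) (hG : IsBddCDF G) (hl0 : 0 < l) (hl1 : l ≤ 1) :
    Q1 F ≤ Q1 (mix l F G) := by
  refine csInf_le_csInf hF.bddBelow_one_le (hF.mix hG ⟨hl0.le, hl1⟩).nonempty_one_le
    fun x hx => ?_
  have hHx : 1 ≤ l * F x + (1 - l) * G x := hx
  have hGx := (hG.2.1 x).2
  show 1 ≤ F x
  nlinarith

lemma spread_mix_le {a b : ℝ} (ha : 0 ≤ a) (hb : 0 ≤ b) (hF : IsBddCDF F) (hG : IsBddCDF G)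
    (hl0 : 0 < l) (hl1 : l ≤ 1) :
    a * Q0 (mix l F G) - b * Q1 (mix l F G) ≤ a * Q0 F - b * Q1 F := by
  have h0 := mul_le_mul_of_nonneg_left (Q0_mix_le hF hG hl0 hl1) ha
  have h1 := mul_le_mul_of_nonneg_left (Q1_le_Q1_mix hF hG hl0 hl1) hb
  linarith

end Mixture

/-- Adding an asymmetric spread `a·Q₀ − b·Q₁` preserves m-quasi-convexity. -/
theorem spread_preserves_mqc (ρ ρt : (ℝ → ℝ) → ℝ) (a b : ℝ) (ha : 0 ≤ a) (hb : 0 ≤ b)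
    (hrep : ∀ F : ℝ → ℝ, IsBddCDF F → ρ F = a * Q0 F - b * Q1 F + ρt F)
    (hqc : ∀ F G : ℝ → ℝ, IsBddCDF F → IsBddCDF G → ∀ l ∈ Set.Icc (0 : ℝ) 1,
      ρt (fun x => l * F x + (1 - l) * G x) ≤ max (ρt F) (ρt G)) :
    ∀ F G : ℝ → ℝ, IsBddCDF F → IsBddCDF G → ∀ l ∈ Set.Icc (0 : ℝ) 1,
      ρ (fun x => l * F x + (1 - l) * G x) ≤ max (ρ F) (ρ G) := by
  intro F G hF hG l hl
  show ρ (mix l F G) ≤ max (ρ F) (ρ G)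
  wlog hFG : ρt G ≤ ρt F generalizing F G l
  · rw [mix_comm, max_comm]
    exact this G F hG hF (1 - l) ⟨sub_nonneg.2 hl.2, sub_le_self _ hl.1⟩ (le_of_not_ge hFG)
  rcases hl.1.eq_or_lt with rfl | hl0
  · simp
  have hρt : ρt (mix l F G) ≤ ρt F := (hqc F G hF hG l hl).trans_eq (max_eq_left hFG)
  have hspread := spread_mix_le ha hb hF hG hl0 hl.2
  rw [hrep _ (hF.mix hG hl), hrep F hF]
  exact le_max_of_le_left (by linarith)
end

section
/- If h: [0,1] → ℝ is convex with h(0) = 0, then the signed Choquet integral I_h is convex with respect to mixtures on compactly supported distributions: I_h(λF + (1−λ)G) ≤ λ·I_h(F) + (1−λ)·I_h(G) for all F, G and λ ∈ [0,1]. -/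
open MeasureTheory

/-- The signed Choquet integral with distortion function `h`. -/
noncomputable def Ih (h F : ℝ → ℝ) : ℝ :=
  (∫ t in Set.Ioi (0 : ℝ), h (1 - F t)) + ∫ t in Set.Iio (0 : ℝ), (h (1 - F t) - h 1)

/-!
A convex `h` satisfies `h (1 - (λ F + (1 - λ) G)) ≤ λ h (1 - F) + (1 - λ) h (1 - G)` pointwise,
because `1 - (λ F + (1 - λ) G) = λ (1 - F) + (1 - λ) (1 - G)`; integrating this over `(0, ∞)` and
`(-∞, 0)` gives the claim. The work is in the integrability of the integrands: a convex function
on `[0, 1]` is bounded there and continuous off the endpoints, hence measurable, and the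
integrands vanish outside the support of the distribution (on `(0, ∞)` because `h 0 = 0`).
-/

open Set

namespace ConvexOn

variable {a b : ℝ} {h : ℝ → ℝ}

theorem measurable_indicator_Icc (hh : ConvexOn ℝ (Icc a b) h) :
    Measurable ((Icc a b).indicator h) := by
  refine ContinuousOn.measurable_of_countable_compl (s := {a, b}ᶜ) ?_ ?_
  · intro x hx
    simp only [mem_compl_iff, mem_insert_iff, mem_singleton_iff, not_or] at hx
    refine ContinuousAt.continuousWithinAt ?_
    by_cases hxI : x ∈ Icc a b
    · have hxo : x ∈ Ioo a b := ⟨lt_of_le_of_ne hxI.1 (Ne.symm hx.1), lt_of_le_of_ne hxI.2 hx.2⟩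
      have hcont : ContinuousOn h (Ioo a b) :=
        (hh.subset Ioo_subset_Icc_self (convex_Ioo a b)).continuousOn isOpen_Ioo
      refine (hcont.continuousAt (Ioo_mem_nhds hxo.1 hxo.2)).congr ?_
      filter_upwards [Ioo_mem_nhds hxo.1 hxo.2] with y hy
      exact (indicator_of_mem (Ioo_subset_Icc_self hy) h).symm
    · refine continuousAt_const.congr (f := fun _ => (0 : ℝ)) ?_
      filter_upwards [isClosed_Icc.isOpen_compl.mem_nhds hxI] with y hy
      exact (indicator_of_notMem hy h).symm
  · rw [compl_compl]
    exact (countable_singleton b).insert a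

/-- The lower bound comes from comparing `h x` and `h (a + b - x)` with `h` at the midpoint. -/
theorem exists_abs_le_of_mem_Icc (hh : ConvexOn ℝ (Icc a b) h) :
    ∃ C, ∀ x ∈ Icc a b, |h x| ≤ C := by
  set M := max (h a) (h b)
  refine ⟨max M (M - 2 * h ((a + b) / 2)), fun x hx => abs_le.2 ⟨?_, ?_⟩⟩
  · have hab : a ≤ b := hx.1.trans hx.2
    have hx' : a + b - x ∈ Icc a b := ⟨by linarith [hx.2], by linarith [hx.1]⟩
    have hmid := hh.2 hx hx' (by norm_num : (0 : ℝ) ≤ 1 / 2) (by norm_num : (0 : ℝ) ≤ 1 / 2)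
      (by norm_num)
    have hmid' : (1 / 2 : ℝ) • x + (1 / 2 : ℝ) • (a + b - x) = (a + b) / 2 := by
      simp only [smul_eq_mul]; ring
    rw [hmid', smul_eq_mul, smul_eq_mul] at hmid
    have hle : h (a + b - x) ≤ M :=
      hh.le_max_of_mem_Icc ⟨le_rfl, hab⟩ ⟨hab, le_rfl⟩ hx'
    linarith [le_max_right M (M - 2 * h ((a + b) / 2))]
  · exact (hh.le_max_of_mem_Icc ⟨le_rfl, hx.1.trans hx.2⟩ ⟨hx.1.trans hx.2, le_rfl⟩ hx).trans
      (le_max_left _ _)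

end ConvexOn

theorem integrableOn_of_abs_le_of_eq_zero_off_Icc {f : ℝ → ℝ} {s : Set ℝ} {a b C : ℝ}
    (hf : Measurable f) (hC : ∀ x, |f x| ≤ C) (hs : MeasurableSet s)
    (hzero : ∀ x ∈ s \ Icc a b, f x = 0) : IntegrableOn f s :=
  (Measure.integrableOn_of_bounded measure_Icc_lt_top.ne hf.aestronglyMeasurable
    (ae_of_all _ hC)).of_forall_sdiff_eq_zero hs hzero

theorem setIntegral_le_of_le_const_mul_add_const_mul {f g k : ℝ → ℝ} {s : Set ℝ} {c d : ℝ}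
    (hk : IntegrableOn k s) (hf : IntegrableOn f s) (hg : IntegrableOn g s) (hs : MeasurableSet s)
    (hle : ∀ x ∈ s, k x ≤ c * f x + d * g x) :
    ∫ x in s, k x ≤ c * (∫ x in s, f x) + d * ∫ x in s, g x := by
  have hmono := setIntegral_mono_on hk ((hf.const_mul c).add (hg.const_mul d)) hs hle
  simp only [Pi.add_apply] at hmono
  rwa [integral_add (hf.const_mul c) (hg.const_mul d), integral_const_mul,
    integral_const_mul] at hmono

namespace IsBddCDF

variable {F G h : ℝ → ℝ}

theorem one_sub_mem_Icc (hF : IsBddCDF F) (x : ℝ) : 1 - F x ∈ Icc (0 : ℝ) 1 := by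
  obtain ⟨h0, h1⟩ := hF.2.1 x
  constructor <;> linarith

theorem exists_eq_zero_eq_one (hF : IsBddCDF F) :
    ∃ a b, a < b ∧ (∀ x ≤ a, F x = 0) ∧ ∀ x, b ≤ x → F x = 1 := by
  obtain ⟨hmono, h01, -, a, b, hab, ha, hb⟩ := hF
  exact ⟨a, b, hab, fun x hx => le_antisymm (ha ▸ hmono hx) (h01 x).1,
    fun x hx => le_antisymm (h01 x).2 (hb ▸ hmono hx)⟩

theorem mix_s7 (hF : IsBddCDF F) (hG : IsBddCDF G) {l : ℝ} (hl : l ∈ Icc (0 : ℝ) 1) :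
    IsBddCDF fun x => l * F x + (1 - l) * G x := by
  obtain ⟨aF, bF, habF, hFa, hFb⟩ := hF.exists_eq_zero_eq_one
  obtain ⟨aG, bG, -, hGa, hGb⟩ := hG.exists_eq_zero_eq_one
  refine ⟨(hF.1.const_mul hl.1).add (hG.1.const_mul (sub_nonneg.2 hl.2)), fun x => ?_,
    fun x => ((hF.2.2.1 x).const_mul l).add ((hG.2.2.1 x).const_mul (1 - l)),
    min aF aG, max bF bG, (min_le_left _ _).trans_lt (habF.trans_le (le_max_left _ _)), ?_, ?_⟩
  · obtain ⟨hF0, hF1⟩ := hF.2.1 x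
    obtain ⟨hG0, hG1⟩ := hG.2.1 x
    constructor <;> nlinarith [hl.1, hl.2]
  · simp only [hFa _ (min_le_left _ _), hGa _ (min_le_right _ _)]; ring
  · simp only [hFb _ (le_max_left _ _), hGb _ (le_max_right _ _)]; ring

theorem comp_one_sub_mix_le (hF : IsBddCDF F) (hG : IsBddCDF G) (hh : ConvexOn ℝ (Icc 0 1) h)
    {l : ℝ} (hl : l ∈ Icc (0 : ℝ) 1) (t : ℝ) :
    h (1 - (l * F t + (1 - l) * G t)) ≤ l * h (1 - F t) + (1 - l) * h (1 - G t) := by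
  have hmix : 1 - (l * F t + (1 - l) * G t) = l * (1 - F t) + (1 - l) * (1 - G t) := by ring
  rw [hmix]
  simpa only [smul_eq_mul] using hh.2 (hF.one_sub_mem_Icc t) (hG.one_sub_mem_Icc t) hl.1
    (sub_nonneg.2 hl.2) (add_sub_cancel l 1)

variable (hF : IsBddCDF F) (hh : ConvexOn ℝ (Icc 0 1) h)
include hF hh

theorem measurable_comp_one_sub : Measurable fun t => h (1 - F t) := by
  have hind : (fun t => h (1 - F t)) = (Icc 0 1).indicator h ∘ fun t => 1 - F t :=
    funext fun t => (indicator_of_mem (hF.one_sub_mem_Icc t) h).symm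
  rw [hind]
  exact hh.measurable_indicator_Icc.comp (measurable_const.sub hF.1.measurable)

theorem exists_abs_comp_one_sub_le : ∃ C, ∀ t, |h (1 - F t)| ≤ C := by
  obtain ⟨C, hC⟩ := hh.exists_abs_le_of_mem_Icc
  exact ⟨C, fun t => hC _ (hF.one_sub_mem_Icc t)⟩

theorem integrableOn_Ioi (h0 : h 0 = 0) : IntegrableOn (fun t => h (1 - F t)) (Ioi 0) := by
  obtain ⟨-, b, -, -, hFb⟩ := hF.exists_eq_zero_eq_one
  obtain ⟨C, hC⟩ := hF.exists_abs_comp_one_sub_le hh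
  refine integrableOn_of_abs_le_of_eq_zero_off_Icc (a := 0) (b := b)
    (hF.measurable_comp_one_sub hh) hC measurableSet_Ioi fun t ht => ?_
  have hbt : b ≤ t := le_of_lt (not_le.1 fun htb => ht.2 ⟨le_of_lt ht.1, htb⟩)
  rw [hFb t hbt, sub_self, h0]

theorem integrableOn_Iio : IntegrableOn (fun t => h (1 - F t) - h 1) (Iio 0) := by
  obtain ⟨a, -, -, hFa, -⟩ := hF.exists_eq_zero_eq_one
  obtain ⟨C, hC⟩ := hF.exists_abs_comp_one_sub_le hh
  refine integrableOn_of_abs_le_of_eq_zero_off_Icc (a := a) (b := 0) (C := C + |h 1|)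
    ((hF.measurable_comp_one_sub hh).sub measurable_const)
    (fun t => (abs_sub _ _).trans (add_le_add_left (hC t) _)) measurableSet_Iio fun t ht => ?_
  have hta : t ≤ a := le_of_lt (not_le.1 fun hat => ht.2 ⟨hat, le_of_lt ht.1⟩)
  simp only [hFa t hta, sub_zero, sub_self]

end IsBddCDF

/-- If `h` is convex on `[0,1]` with `h 0 = 0`, then `I_h` is m-convex. -/
theorem Ih_mconvex_of_convex (h : ℝ → ℝ) (h0 : h 0 = 0)
    (hcx : ConvexOn ℝ (Set.Icc (0 : ℝ) 1) h)
    (F G : ℝ → ℝ) (hF : IsBddCDF F) (hG : IsBddCDF G) (l : ℝ) (hl : l ∈ Set.Icc (0 : ℝ) 1) :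
    Ih h (fun x => l * F x + (1 - l) * G x) ≤ l * Ih h F + (1 - l) * Ih h G := by
  have hK := hF.mix_s7 hG hl
  have hpt := hF.comp_one_sub_mix_le hG hcx hl
  have hIoi := setIntegral_le_of_le_const_mul_add_const_mul (c := l) (d := 1 - l)
    (hK.integrableOn_Ioi hcx h0) (hF.integrableOn_Ioi hcx h0) (hG.integrableOn_Ioi hcx h0)
    measurableSet_Ioi fun t _ => hpt t
  have hIio := setIntegral_le_of_le_const_mul_add_const_mul (c := l) (d := 1 - l)
    (hK.integrableOn_Iio hcx) (hF.integrableOn_Iio hcx) (hG.integrableOn_Iio hcx)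
    measurableSet_Iio fun t _ => by linarith [hpt t]
  simp only [Ih]
  linarith
end

section
/- For any level α ∈ (0,1), the right quantile functional Q_α⁺(F) = inf{x : F(x) > α} satisfies min{Q_α⁺(F), Q_α⁺(G)} ≤ Q_α⁺(λF + (1−λ)G) ≤ max{Q_α⁺(F), Q_α⁺(G)} for all CDFs F, G with bounded support and λ ∈ [0,1]; hence Q_α⁺ is both m-quasi-convex and m-quasi-concave. -/
/-- The right quantile at level `α`. -/
noncomputable def Qplus (α : ℝ) (F : ℝ → ℝ) : ℝ := sInf {x : ℝ | α < F x}

open Set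

theorem IsUpperSet.Ioi_csInf_subset {β : Type*} [ConditionallyCompleteLinearOrder β] {s : Set β}
    (hs : IsUpperSet s) (hne : s.Nonempty) : Ioi (sInf s) ⊆ s := fun x hx => by
  obtain ⟨y, hy, hyx⟩ := exists_lt_of_csInf_lt hne hx
  exact hs hyx.le hy

theorem IsUpperSet.Ioi_max_csInf_subset_inter {β : Type*} [ConditionallyCompleteLinearOrder β]
    {s t : Set β} (hs : IsUpperSet s) (ht : IsUpperSet t) (hsne : s.Nonempty) (htne : t.Nonempty) :
    Ioi (max (sInf s) (sInf t)) ⊆ s ∩ t := by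
  rw [← Ioi_inter_Ioi]
  exact inter_subset_inter (hs.Ioi_csInf_subset hsne) (ht.Ioi_csInf_subset htne)

section Mixture

variable {X : Type*} {α l : ℝ} {F G : X → ℝ}

theorem setOf_lt_mixture_subset_union (hl : l ∈ Icc (0 : ℝ) 1) :
    {x | α < l * F x + (1 - l) * G x} ⊆ {x | α < F x} ∪ {x | α < G x} := by
  intro x hx
  by_contra hFG
  simp only [mem_union, mem_ofPred_eq, not_or, not_lt] at hFG
  have hle := convex_Iic α hFG.1 hFG.2 hl.1 (sub_nonneg.2 hl.2) (add_sub_cancel l 1)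
  simp only [smul_eq_mul, mem_Iic] at hle
  exact hle.not_gt hx

theorem inter_subset_setOf_lt_mixture (hl : l ∈ Icc (0 : ℝ) 1) :
    {x | α < F x} ∩ {x | α < G x} ⊆ {x | α < l * F x + (1 - l) * G x} := fun _ hx =>
  convex_Ioi α hx.1 hx.2 hl.1 (sub_nonneg.2 hl.2) (add_sub_cancel l 1)

end Mixture

section SuperlevelSet

variable {α : ℝ} {F : ℝ → ℝ}

theorem Monotone.isUpperSet_setOf_lt (hF : Monotone F) : IsUpperSet {x | α < F x} :=
  fun _ _ hxy hx => hx.trans_le (hF hxy)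

theorem Monotone.bddBelow_setOf_lt {a : ℝ} (hF : Monotone F) (ha : F a ≤ α) :
    BddBelow {x | α < F x} :=
  ⟨a, fun _ hx => le_of_not_gt fun hxa => (hx.trans_le (hF hxa.le)).not_ge ha⟩

theorem IsBddCDF.bddBelow_setOf_lt (hF : IsBddCDF F) (hα : 0 ≤ α) : BddBelow {x | α < F x} := by
  obtain ⟨hmono, -, -, a, -, -, ha, -⟩ := hF
  exact hmono.bddBelow_setOf_lt (ha.trans_le hα)

theorem IsBddCDF.nonempty_setOf_lt (hF : IsBddCDF F) (hα : α < 1) : {x | α < F x}.Nonempty := by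
  obtain ⟨-, -, -, -, b, -, -, hb⟩ := hF
  exact ⟨b, show α < F b from hb ▸ hα⟩

end SuperlevelSet

/-- The right quantile at a mixture lies between the min and the max of the
right quantiles; hence it is both m-quasi-convex and m-quasi-concave. -/
theorem rightQuantile_mixture (α : ℝ) (hα : α ∈ Set.Ioo (0 : ℝ) 1)
    (F G : ℝ → ℝ) (hF : IsBddCDF F) (hG : IsBddCDF G) (l : ℝ) (hl : l ∈ Set.Icc (0 : ℝ) 1) :
    min (Qplus α F) (Qplus α G) ≤ Qplus α (fun x => l * F x + (1 - l) * G x) ∧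
    Qplus α (fun x => l * F x + (1 - l) * G x) ≤ max (Qplus α F) (Qplus α G) := by
  have hbdd : BddBelow ({x | α < F x} ∪ {x | α < G x}) :=
    (hF.bddBelow_setOf_lt hα.1.le).union (hG.bddBelow_setOf_lt hα.1.le)
  have hray : Ioi (max (Qplus α F) (Qplus α G)) ⊆ {x | α < l * F x + (1 - l) * G x} :=
    (IsUpperSet.Ioi_max_csInf_subset_inter hF.1.isUpperSet_setOf_lt hG.1.isUpperSet_setOf_lt
      (hF.nonempty_setOf_lt hα.2) (hG.nonempty_setOf_lt hα.2)).trans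
      (inter_subset_setOf_lt_mixture hl)
  constructor
  · exact (le_csInf_union _ _).trans
      (csInf_le_csInf hbdd (nonempty_Ioi.mono hray) (setOf_lt_mixture_subset_union hl))
  · calc Qplus α (fun x => l * F x + (1 - l) * G x)
        ≤ sInf (Ioi (max (Qplus α F) (Qplus α G))) :=
          csInf_le_csInf (hbdd.mono (setOf_lt_mixture_subset_union hl)) nonempty_Ioi hray
      _ = max (Qplus α F) (Qplus α G) := csInf_Ioi
end

section
/- Let h: [0,1] → ℝ be quasi-convex with h(0) = 0, and suppose h(1⁻) := lim_{p↑1} h(p) exists and h(1⁻) > h(1). Then h is decreasing on [0,1]. -/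
/-!
By quasi-convexity, on `[z, 1]` the function is bounded by `max (h z) (h 1)`. Letting the
argument tend to `1` from the left gives `h(1⁻) ≤ max (h z) (h 1)`, so `h(1⁻) ≤ h z` for every
`z < 1`, as `h 1 < h(1⁻)`. For `x ≤ y < 1`, quasi-convexity on `[x, p]` with `p ↑ 1` gives
`h y ≤ max (h x) h(1⁻) = h x`; the case `y = 1` is `h 1 < h(1⁻) ≤ h x`.
-/

open Set Filter Topology

namespace QuasiconvexOn

variable {𝕜 β : Type*} [Field 𝕜] [LinearOrder 𝕜] [IsStrictOrderedRing 𝕜] [LinearOrder β]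
  {s : Set 𝕜} {f : 𝕜 → β} {a b c : 𝕜}

theorem le_max_of_mem_Icc (hf : QuasiconvexOn 𝕜 s f) (ha : a ∈ s) (hc : c ∈ s)
    (hb : b ∈ Icc a c) : f b ≤ max (f a) (f c) :=
  ((hf _).ordConnected.out ⟨ha, le_max_left _ _⟩ ⟨hc, le_max_right _ _⟩ hb).2

variable [TopologicalSpace 𝕜] [OrderTopology 𝕜] [TopologicalSpace β] [OrderClosedTopology β]
  {L : β}

theorem le_max_of_tendsto_nhdsLT (hf : QuasiconvexOn 𝕜 s f) (ha : a ∈ s) (hc : c ∈ s)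
    (hab : a ≤ b) (hbc : b < c) (hlim : Tendsto f (𝓝[<] c) (𝓝 L)) :
    f b ≤ max (f a) L := by
  have hbound : ∀ᶠ p in 𝓝[<] c, f b ≤ max (f a) (f p) := by
    filter_upwards [Ioo_mem_nhdsLT hbc] with p hp
    have hps : p ∈ s := hf.convex.ordConnected.out ha hc ⟨hab.trans hp.1.le, hp.2.le⟩
    exact hf.le_max_of_mem_Icc ha hps ⟨hab, hp.1.le⟩
  exact ge_of_tendsto (tendsto_const_nhds.max hlim) hbound

theorem le_of_tendsto_nhdsLT (hf : QuasiconvexOn 𝕜 s f) (hb : b ∈ s) (hc : c ∈ s) (hbc : b < c)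
    (hlim : Tendsto f (𝓝[<] c) (𝓝 L)) (hL : f c < L) : L ≤ f b := by
  have hbound : ∀ᶠ p in 𝓝[<] c, f p ≤ max (f b) (f c) := by
    filter_upwards [Ioo_mem_nhdsLT hbc] with p hp
    exact hf.le_max_of_mem_Icc hb hc ⟨hp.1.le, hp.2.le⟩
  exact (le_max_iff.mp (le_of_tendsto hlim hbound)).resolve_right hL.not_ge

theorem antitoneOn_of_tendsto_nhdsLT (hf : QuasiconvexOn 𝕜 s f) (hc : c ∈ s)
    (hlim : Tendsto f (𝓝[<] c) (𝓝 L)) (hL : f c < L) : AntitoneOn f (s ∩ Iic c) := by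
  rintro x ⟨hxs, -⟩ y ⟨-, hyc⟩ hxy
  obtain hyc | rfl := hyc.lt_or_eq
  · calc f y ≤ max (f x) L := hf.le_max_of_tendsto_nhdsLT hxs hc hxy hyc hlim
      _ = f x := max_eq_left (hf.le_of_tendsto_nhdsLT hxs hc (hxy.trans_lt hyc) hlim hL)
  · obtain hxy | rfl := hxy.lt_or_eq
    · exact hL.le.trans (hf.le_of_tendsto_nhdsLT hxs hc hxy hlim hL)
    · exact le_rfl

end QuasiconvexOn

theorem decreasing_of_quasiconvex_left_limit_general (h : ℝ → ℝ)
    (hqc : ∀ p ∈ Set.Icc (0 : ℝ) 1, ∀ q ∈ Set.Icc (0 : ℝ) 1, ∀ l ∈ Set.Icc (0 : ℝ) 1,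
      h (l * p + (1 - l) * q) ≤ max (h p) (h q))
    (L : ℝ) (hlim : Filter.Tendsto h (nhdsWithin 1 (Set.Ico (0 : ℝ) 1)) (nhds L))
    (hL : h 1 < L) :
    AntitoneOn h (Set.Icc (0 : ℝ) 1) := by
  have hquasi : QuasiconvexOn ℝ (Icc 0 1) h := by
    refine quasiconvexOn_iff_le_max.mpr ⟨convex_Icc 0 1, fun p hp q hq a b ha hb hab => ?_⟩
    obtain rfl : b = 1 - a := by linarith
    exact hqc p hp q hq a ⟨ha, by linarith⟩
  rw [nhdsWithin_Ico_eq_nhdsLT one_pos] at hlim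
  exact (hquasi.antitoneOn_of_tendsto_nhdsLT (right_mem_Icc.mpr zero_le_one) hlim hL).mono
    fun x hx => ⟨hx, hx.2⟩

/-- If `h` is quasi-convex on `[0,1]` with `h 0 = 0` and the left limit
`h(1⁻)` exists and exceeds `h 1`, then `h` is decreasing on `[0,1]`. -/
theorem decreasing_of_quasiconvex_left_limit (h : ℝ → ℝ) (h0 : h 0 = 0)
    (hqc : ∀ p ∈ Set.Icc (0 : ℝ) 1, ∀ q ∈ Set.Icc (0 : ℝ) 1, ∀ l ∈ Set.Icc (0 : ℝ) 1,
      h (l * p + (1 - l) * q) ≤ max (h p) (h q))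
    (L : ℝ) (hlim : Filter.Tendsto h (nhdsWithin 1 (Set.Ico (0 : ℝ) 1)) (nhds L))
    (hL : h 1 < L) :
    AntitoneOn h (Set.Icc (0 : ℝ) 1) :=
  decreasing_of_quasiconvex_left_limit_general h hqc L hlim hL
end
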